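/- arXiv:1411.7524 — 3 statements merged into one kernel-verified Lean document; each statement's English description precedes it below -/
import Mathlib

section
/- Let K = ℤ/Nℤ and let G_N be the Heisenberg group of order N³ on μ_N × (K × K̂) with multiplication (a, k, l)·(a', k', l') = (a·a'·l'(k), k+k', l·l'). Then every abelian subgroup of G_N has order at most N², hence index at least N in G_N. -/
/-!
Two elements of `G_N` commute iff their images `(k, l), (k', l')` in `K × K̂` satisfy
`l k' = l' k`, i.e. iff they are orthogonal for the nondegenerate pairing
`ω((k, l), (k', l')) = l(k') · l'(-k)`. So an abelian subgroup `A` projects onto a subgroup `B`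
of `K × K̂` with `B ⊆ B^⊥`, and the fibres of the projection lie in the centre `μ_N`.
Double counting `∑_{b ∈ B} ∑_q ω(b, q)` gives `|B| · |B^⊥| = N²`, hence `|B| ≤ N` and
`|A| ≤ N · |B| ≤ N²`.
-/

lemma char_pow_card {N : ℕ} (φ : AddChar (ZMod N) ℂˣ) (x : ZMod N) : (φ x) ^ N = 1 := by
  rw [← AddChar.map_nsmul_eq_pow, nsmul_eq_mul, ZMod.natCast_self, zero_mul,
    AddChar.map_zero_eq_one]

lemma char_mem_rootsOfUnity {N : ℕ} (φ : AddChar (ZMod N) ℂˣ) (x : ZMod N) :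
    φ x ∈ rootsOfUnity N ℂ := (mem_rootsOfUnity N _).2 (char_pow_card φ x)

/-- The finite Heisenberg-type group on `μ_N × (ℤ/Nℤ × (ℤ/Nℤ)^)`. -/
@[ext] structure HeisMu (N : ℕ) where
  a : rootsOfUnity N ℂ
  k : ZMod N
  l : AddChar (ZMod N) ℂˣ

namespace HeisMu
variable {N : ℕ}

instance : Group (HeisMu N) where
  mul x y := ⟨x.a * y.a * ⟨y.l x.k, char_mem_rootsOfUnity y.l x.k⟩, x.k + y.k, x.l * y.l⟩
  one := ⟨1, 0, 1⟩
  inv x := ⟨x.a⁻¹ * ⟨x.l x.k, char_mem_rootsOfUnity x.l x.k⟩, -x.k, x.l⁻¹⟩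
  mul_assoc x y z := by
    refine HeisMu.ext ?_ ?_ ?_
    · show (x.a * y.a * ⟨y.l x.k, _⟩) * z.a * ⟨z.l (x.k + y.k), _⟩ =
        x.a * (y.a * z.a * ⟨z.l y.k, _⟩) * ⟨(y.l * z.l) x.k, _⟩
      apply Subtype.ext
      apply Units.ext
      push_cast [AddChar.map_add_eq_mul, AddChar.mul_apply]
      ring
    · show x.k + y.k + z.k = x.k + (y.k + z.k); ring
    · show x.l * y.l * z.l = x.l * (y.l * z.l); exact mul_assoc _ _ _
  one_mul x := by
    refine HeisMu.ext ?_ ?_ ?_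
    · show 1 * x.a * ⟨x.l 0, _⟩ = x.a
      apply Subtype.ext; apply Units.ext
      push_cast [AddChar.map_zero_eq_one]
      ring
    · show 0 + x.k = x.k; ring
    · show 1 * x.l = x.l; exact one_mul (M := AddChar (ZMod N) ℂˣ) x.l
  mul_one x := by
    refine HeisMu.ext ?_ ?_ ?_
    · show x.a * 1 * ⟨(1 : AddChar (ZMod N) ℂˣ) x.k, _⟩ = x.a
      apply Subtype.ext; apply Units.ext
      push_cast [AddChar.one_apply]
      ring
    · show x.k + 0 = x.k; ring
    · show x.l * 1 = x.l; exact mul_one (M := AddChar (ZMod N) ℂˣ) x.l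
  inv_mul_cancel x := by
    refine HeisMu.ext ?_ ?_ ?_
    · show (x.a⁻¹ * ⟨x.l x.k, _⟩) * x.a * ⟨x.l (-x.k), _⟩ = 1
      apply Subtype.ext; apply Units.ext
      push_cast [AddChar.map_neg_eq_inv]
      field_simp
    · show -x.k + x.k = 0; ring
    · show x.l⁻¹ * x.l = 1; exact inv_mul_cancel (G := AddChar (ZMod N) ℂˣ) x.l

theorem mul_def (x y : HeisMu N) :
    x * y = ⟨x.a * y.a * ⟨y.l x.k, char_mem_rootsOfUnity y.l x.k⟩,
      x.k + y.k, x.l * y.l⟩ := rfl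
theorem one_def : (1 : HeisMu N) = ⟨1, 0, 1⟩ := rfl

end HeisMu

namespace AddChar

variable {A M : Type*} [AddGroup A] [CommMonoid M]

noncomputable def unitsAddEquiv : AddChar A Mˣ ≃+ AddChar A M where
  toFun ψ := (Units.coeHom M).compAddChar ψ
  invFun ψ :=
    { toFun a := (ψ.val_isUnit a).unit
      map_zero_eq_one' := by ext; simp
      map_add_eq_mul' a b := by ext; simp [ψ.map_add_eq_mul] }
  left_inv ψ := by ext; simp
  right_inv ψ := by ext; simp
  map_add' ψ φ := by ext; simp

@[simp] lemma unitsAddEquiv_apply (ψ : AddChar A Mˣ) (a : A) :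
    unitsAddEquiv ψ a = (ψ a : M) := rfl

end AddChar

section Annihilator

variable {P Q : Type*} [AddCommGroup P] [AddCommGroup Q]

def AddSubgroup.annihilator (Ψ : P →+ AddChar Q ℂ) (B : AddSubgroup P) : AddSubgroup Q where
  carrier := {q | ∀ b ∈ B, Ψ b q = 1}
  zero_mem' b _ := by simp
  add_mem' hq hq' b hb := by simp [AddChar.map_add_eq_mul, hq b hb, hq' b hb]
  neg_mem' hq b hb := by simp [AddChar.map_neg_eq_inv, hq b hb]

lemma AddSubgroup.mem_annihilator {Ψ : P →+ AddChar Q ℂ} {B : AddSubgroup P} {q : Q} :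
    q ∈ B.annihilator Ψ ↔ ∀ b ∈ B, Ψ b q = 1 := Iff.rfl

theorem AddSubgroup.card_mul_card_annihilator [Finite Q] (Ψ : P →+ AddChar Q ℂ)
    (hΨ : Function.Injective Ψ) (B : AddSubgroup P) :
    Nat.card B * Nat.card (B.annihilator Ψ) = Nat.card Q := by
  classical
  have : Finite P := Finite.of_injective Ψ hΨ
  have := Fintype.ofFinite Q
  have := Fintype.ofFinite B
  have hrow (b : B) : ∑ q : Q, Ψ b q = if b = 0 then (Fintype.card Q : ℂ) else 0 := by
    simp only [AddChar.sum_eq_ite, map_eq_zero_iff Ψ hΨ, ZeroMemClass.coe_eq_zero]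
  have hcol (q : Q) : ∑ b : B, Ψ b q = if q ∈ B.annihilator Ψ then (Fintype.card B : ℂ) else 0 := by
    let χ : AddChar B ℂ := (AddChar.doubleDualEmb q).compAddMonoidHom (Ψ.comp B.subtype)
    have hχ : χ = 0 ↔ q ∈ B.annihilator Ψ := by
      simp [DFunLike.ext_iff, mem_annihilator, χ]
    rw [← hχ]
    exact AddChar.sum_eq_ite χ
  have : (Nat.card Q : ℂ) = Nat.card B * Nat.card (B.annihilator Ψ) := calc
    (Nat.card Q : ℂ) = ∑ b : B, ∑ q : Q, Ψ b q := by simp [hrow]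
    _ = ∑ q : Q, ∑ b : B, Ψ b q := Finset.sum_comm
    _ = Nat.card B * Nat.card (B.annihilator Ψ) := by
      simp [hcol, Finset.sum_ite, Nat.card_eq_fintype_card, Fintype.card_subtype, mul_comm]
  exact_mod_cast this.symm

theorem AddSubgroup.card_sq_le_of_le_annihilator [Finite P] (Ψ : P →+ AddChar P ℂ)
    (hΨ : Function.Injective Ψ) {B : AddSubgroup P} (hB : B ≤ B.annihilator Ψ) :
    Nat.card B ^ 2 ≤ Nat.card P := calc
  Nat.card B ^ 2 ≤ Nat.card B * Nat.card (B.annihilator Ψ) := by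
    rw [sq]; exact Nat.mul_le_mul_left _ (AddSubgroup.card_le_of_le hB)
  _ = Nat.card P := B.card_mul_card_annihilator Ψ hΨ

end Annihilator

namespace AddChar

variable (α : Type*) [AddCommGroup α]

def symplecticPairing : (α × AddChar α ℂ) →+ AddChar (α × AddChar α ℂ) ℂ where
  toFun p :=
    { toFun q := p.2 q.1 * q.2 (-p.1)
      map_zero_eq_one' := by simp
      map_add_eq_mul' q r := by
        simp only [Prod.fst_add, Prod.snd_add, map_add_eq_mul, add_apply]
        ring }
  map_zero' := by ext; simp
  map_add' p p' := by
    ext q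
    simp only [coe_mk, add_apply, Prod.fst_add, Prod.snd_add, neg_add, map_add_eq_mul]
    ring

variable {α}

@[simp] lemma symplecticPairing_apply (p q : α × AddChar α ℂ) :
    symplecticPairing α p q = p.2 q.1 * q.2 (-p.1) := rfl

lemma symplecticPairing_injective [Finite α] : Function.Injective (symplecticPairing α) := by
  rw [injective_iff_map_eq_zero]
  rintro ⟨a, ψ⟩ hp
  have h (q : α × AddChar α ℂ) : ψ q.1 * q.2 (-a) = 1 := DFunLike.congr_fun hp q
  have hψ : ψ = 0 := by
    ext b
    simpa using h (b, 0)
  have ha : a = 0 := by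
    rw [← neg_eq_zero, ← forall_apply_eq_zero]
    intro φ
    simpa [hψ] using h (0, φ)
  rw [ha, hψ]; rfl

end AddChar

namespace HeisMu

variable {N : ℕ}

theorem mul_comm_iff {x y : HeisMu N} : x * y = y * x ↔ x.l y.k = y.l x.k := by
  rw [HeisMu.ext_iff, mul_def, mul_def]
  simp only [add_comm x.k, mul_comm x.l, and_true, Subtype.ext_iff, Subgroup.coe_mul,
    mul_comm (x.a : ℂˣ) y.a, mul_right_inj]
  exact eq_comm

def equivProd (N : ℕ) : HeisMu N ≃ rootsOfUnity N ℂ × ZMod N × AddChar (ZMod N) ℂˣ where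
  toFun x := (x.a, x.k, x.l)
  invFun p := ⟨p.1, p.2.1, p.2.2⟩

section NeZero

variable [NeZero N]

instance : Finite (AddChar (ZMod N) ℂˣ) := .of_equiv _ AddChar.unitsAddEquiv.symm.toEquiv

instance : Finite (HeisMu N) := .of_equiv _ (equivProd N).symm

lemma card_eq : Nat.card (HeisMu N) = N ^ 3 := by
  rw [Nat.card_congr (equivProd N), Nat.card_prod, Nat.card_prod, Complex.card_rootsOfUnity,
    Nat.card_zmod, Nat.card_congr AddChar.unitsAddEquiv.toEquiv, Nat.card_eq_fintype_card,
    AddChar.card_eq, ZMod.card]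
  ring

end NeZero

noncomputable def proj (N : ℕ) : HeisMu N →* Multiplicative (ZMod N × AddChar (ZMod N) ℂ) where
  toFun x := .ofAdd (x.k, AddChar.unitsAddEquiv x.l)
  map_one' := by simp [one_def]; rfl
  map_mul' x y := by simp [mul_def]; rfl

lemma card_le_mul_card_map_proj [NeZero N] (A : Subgroup (HeisMu N)) :
    Nat.card A ≤ N * Nat.card (A.map (proj N)) := by
  let f : A → rootsOfUnity N ℂ × A.map (proj N) := fun x => (x.1.a, ⟨proj N x, x.1, x.2, rfl⟩)
  have hf : Function.Injective f := by
    intro x y h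
    simp only [f, Prod.mk.injEq, Subtype.mk.injEq, proj, MonoidHom.coe_mk, OneHom.coe_mk,
      EmbeddingLike.apply_eq_iff_eq] at h
    obtain ⟨ha, hk, hl⟩ := h
    exact Subtype.ext (HeisMu.ext ha hk hl)
  calc Nat.card A ≤ Nat.card (rootsOfUnity N ℂ × A.map (proj N)) :=
        Nat.card_le_card_of_injective f hf
    _ ≤ N * Nat.card (A.map (proj N)) := by
      rw [Nat.card_prod]; exact Nat.mul_le_mul_right _ (card_rootsOfUnity ℂ N)

lemma map_proj_le_annihilator {A : Subgroup (HeisMu N)} (hA : ∀ x ∈ A, ∀ y ∈ A, x * y = y * x) :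
    (A.map (proj N)).toAddSubgroup' ≤
      (A.map (proj N)).toAddSubgroup'.annihilator (AddChar.symplecticPairing (ZMod N)) := by
  rintro _ ⟨y, hy, rfl⟩ _ ⟨x, hx, rfl⟩
  show AddChar.symplecticPairing _ (x.k, AddChar.unitsAddEquiv x.l)
    (y.k, AddChar.unitsAddEquiv y.l) = 1
  rw [AddChar.symplecticPairing_apply, AddChar.unitsAddEquiv_apply, AddChar.unitsAddEquiv_apply,
    mul_comm_iff.mp (hA x hx y hy), ← Units.val_mul, ← AddChar.map_add_eq_mul, add_neg_cancel, AddChar.map_zero_eq_one,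
    Units.val_one]

lemma card_map_proj_le [NeZero N] {A : Subgroup (HeisMu N)}
    (hA : ∀ x ∈ A, ∀ y ∈ A, x * y = y * x) : Nat.card (A.map (proj N)) ≤ N := by
  have h := AddSubgroup.card_sq_le_of_le_annihilator _ AddChar.symplecticPairing_injective
    (map_proj_le_annihilator hA)
  rw [Nat.card_prod, Nat.card_zmod, Nat.card_eq_fintype_card (α := AddChar _ _), AddChar.card_eq,
    ZMod.card, ← sq] at h
  exact (Nat.pow_le_pow_iff_left two_ne_zero).mp h

end HeisMu

/-- Every abelian subgroup of the order-`N³` group `G_N` on `μ_N × (ℤ/Nℤ × (ℤ/Nℤ)^)`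
has order at most `N²`, hence index at least `N`. -/
theorem statement3 (N : ℕ) (hN : 0 < N) (A : Subgroup (HeisMu N))
    (hA : ∀ x ∈ A, ∀ y ∈ A, x * y = y * x) :
    Nat.card A ≤ N ^ 2 ∧ N ≤ A.index := by
  have : NeZero N := ⟨hN.ne'⟩
  have hA2 : Nat.card A ≤ N ^ 2 := calc
    Nat.card A ≤ N * Nat.card (A.map (HeisMu.proj N)) := HeisMu.card_le_mul_card_map_proj A
    _ ≤ N * N := Nat.mul_le_mul_left _ (HeisMu.card_map_proj_le hA)
    _ = N ^ 2 := (sq N).symm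
  refine ⟨hA2, Nat.le_of_mul_le_mul_left ?_ (pow_pos hN 2)⟩
  calc N ^ 2 * N = Nat.card (HeisMu N) := by rw [HeisMu.card_eq]; ring
    _ = Nat.card A * A.index := A.card_mul_index.symm
    _ ≤ N ^ 2 * A.index := Nat.mul_le_mul_right _ hA2
end

section
/- Any group containing, for every N ≥ 1, a subgroup isomorphic to the Heisenberg group H_N of order N³ (the group on (ℤ/Nℤ)³ with multiplication (a,k,l)·(a',k',l') = (a+a'+l'·k, k+k', l+l')) does not have the Jordan property. -/
/-- The Heisenberg group on `(ℤ/Nℤ)³` with multiplication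
`(a,k,l)·(a',k',l') = (a+a'+l'k, k+k', l+l')`. -/
@[ext] structure HeisZ (N : ℕ) where
  a : ZMod N
  k : ZMod N
  l : ZMod N

namespace HeisZ
variable {N : ℕ}

instance : Group (HeisZ N) where
  mul x y := ⟨x.a + y.a + y.l * x.k, x.k + y.k, x.l + y.l⟩
  one := ⟨0, 0, 0⟩
  inv x := ⟨-x.a + x.l * x.k, -x.k, -x.l⟩
  mul_assoc x y z := by
    refine HeisZ.ext ?_ ?_ ?_
    · show (x.a + y.a + y.l * x.k) + z.a + z.l * (x.k + y.k) =
        x.a + (y.a + z.a + z.l * y.k) + (y.l + z.l) * x.k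
      ring
    · show x.k + y.k + z.k = x.k + (y.k + z.k); ring
    · show x.l + y.l + z.l = x.l + (y.l + z.l); ring
  one_mul x := by
    refine HeisZ.ext ?_ ?_ ?_
    · show 0 + x.a + x.l * 0 = x.a; ring
    · show 0 + x.k = x.k; ring
    · show 0 + x.l = x.l; ring
  mul_one x := by
    refine HeisZ.ext ?_ ?_ ?_
    · show x.a + 0 + 0 * x.k = x.a; ring
    · show x.k + 0 = x.k; ring
    · show x.l + 0 = x.l; ring
  inv_mul_cancel x := by
    refine HeisZ.ext ?_ ?_ ?_
    · show (-x.a + x.l * x.k) + x.a + x.l * (-x.k) = 0; ring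
    · show -x.k + x.k = 0; ring
    · show -x.l + x.l = 0; ring

theorem mul_def (x y : HeisZ N) :
    x * y = ⟨x.a + y.a + y.l * x.k, x.k + y.k, x.l + y.l⟩ := rfl
theorem one_def : (1 : HeisZ N) = ⟨0, 0, 0⟩ := rfl

end HeisZ

/-- Jordan property: a constant `c` such that every finite subgroup has an abelian
subgroup of index at most `c`. -/
def JordanProperty (G : Type*) [Group G] : Prop :=
  ∃ c : ℕ, ∀ H : Subgroup G, Finite H →
    ∃ A : Subgroup H, (∀ x ∈ A, ∀ y ∈ A, x * y = y * x) ∧ A.index ≤ c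

section Aux

/-- equiv to the product, for counting -/
def heisEquiv (N : ℕ) : HeisZ N ≃ ZMod N × ZMod N × ZMod N where
  toFun x := (x.a, x.k, x.l)
  invFun p := ⟨p.1, p.2.1, p.2.2⟩
  left_inv x := rfl
  right_inv p := rfl

theorem heis_card (N : ℕ) [NeZero N] : Nat.card (HeisZ N) = N ^ 3 := by
  rw [Nat.card_congr (heisEquiv N)]
  simp [Nat.card_prod, ZMod.card]; ring

instance heisFinite (N : ℕ) [NeZero N] : Finite (HeisZ N) :=
  Finite.of_equiv _ (heisEquiv N).symm

/-- projection hom -/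
def heisProj (N : ℕ) : HeisZ N →* Multiplicative (ZMod N) × Multiplicative (ZMod N) where
  toFun x := (Multiplicative.ofAdd x.k, Multiplicative.ofAdd x.l)
  map_one' := rfl
  map_mul' x y := by
    show (Multiplicative.ofAdd (x.k + y.k), Multiplicative.ofAdd (x.l + y.l)) = _
    rw [Prod.mk_mul_mk, ofAdd_add, ofAdd_add]

/-- key lemma: an abelian subgroup of HeisZ p (p prime) has order ≤ p² -/
theorem heis_abelian_card_le (p : ℕ) (hp : p.Prime)
    (B : Subgroup (HeisZ p)) (hB : ∀ x ∈ B, ∀ y ∈ B, x * y = y * x) :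
    Nat.card B ≤ p ^ 2 := by
  haveI : NeZero p := ⟨hp.ne_zero⟩
  haveI : Fact p.Prime := ⟨hp⟩
  by_contra hc
  push_neg at hc
  set φ : B →* Multiplicative (ZMod p) × Multiplicative (ZMod p) :=
    (heisProj p).comp B.subtype with hφ
  have hcardT : Nat.card (Multiplicative (ZMod p) × Multiplicative (ZMod p)) = p ^ 2 := by
    rw [Nat.card_prod, Nat.card_congr Multiplicative.toAdd, Nat.card_zmod, sq]
  -- card ker ≤ p
  have hker : Nat.card φ.ker ≤ p := by
    have hinj : Function.Injective (fun x : φ.ker => ((x : B) : HeisZ p).a) := by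
      rintro ⟨x, hx⟩ ⟨y, hy⟩ hxy
      replace hx : φ x = 1 := hx
      replace hy : φ y = 1 := hy
      have hxk : ((x : HeisZ p)).k = 0 := congrArg
        (fun q : Multiplicative (ZMod p) × Multiplicative (ZMod p) => Multiplicative.toAdd q.1) hx
      have hxl : ((x : HeisZ p)).l = 0 := congrArg
        (fun q : Multiplicative (ZMod p) × Multiplicative (ZMod p) => Multiplicative.toAdd q.2) hx
      have hyk : ((y : HeisZ p)).k = 0 := congrArg
        (fun q : Multiplicative (ZMod p) × Multiplicative (ZMod p) => Multiplicative.toAdd q.1) hy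
      have hyl : ((y : HeisZ p)).l = 0 := congrArg
        (fun q : Multiplicative (ZMod p) × Multiplicative (ZMod p) => Multiplicative.toAdd q.2) hy
      have : (x : HeisZ p) = (y : HeisZ p) := by
        ext
        · exact hxy
        · rw [hxk, hyk]
        · rw [hxl, hyl]
      exact Subtype.ext (Subtype.ext this)
    calc Nat.card φ.ker ≤ Nat.card (ZMod p) := Nat.card_le_card_of_injective _ hinj
      _ = p := Nat.card_zmod p
  -- card B = card range * card ker
  have hsplit : Nat.card B = Nat.card φ.range * Nat.card φ.ker := by
    rw [← Nat.card_congr (QuotientGroup.quotientKerEquivRange φ).toEquiv]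
    exact (Subgroup.card_eq_card_quotient_mul_card_subgroup φ.ker)
  have hrange : p < Nat.card φ.range := by
    by_contra hr
    push_neg at hr
    have : Nat.card B ≤ p * p := by
      calc Nat.card B = Nat.card φ.range * Nat.card φ.ker := hsplit
        _ ≤ p * p := Nat.mul_le_mul hr hker
    have h2 : p ^ 2 < p * p := lt_of_lt_of_le hc this
    rw [sq] at h2; exact lt_irrefl _ h2
  have hdvd : Nat.card φ.range ∣ p ^ 2 := by
    have := Subgroup.card_subgroup_dvd_card φ.range
    rwa [hcardT] at this
  have hr2 : Nat.card φ.range = p ^ 2 := by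
    rcases (Nat.dvd_prime_pow hp).mp hdvd with ⟨k, hk, hcard⟩
    interval_cases k
    · rw [pow_zero] at hcard; have := hp.two_le; omega
    · rw [pow_one] at hcard; omega
    · simpa using hcard
  have htop : φ.range = ⊤ := Subgroup.eq_top_of_card_eq _ (by rw [hr2, hcardT])
  have h10 : (Multiplicative.ofAdd (1 : ZMod p), Multiplicative.ofAdd (0 : ZMod p)) ∈ φ.range :=
    htop ▸ Subgroup.mem_top _
  have h01 : (Multiplicative.ofAdd (0 : ZMod p), Multiplicative.ofAdd (1 : ZMod p)) ∈ φ.range :=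
    htop ▸ Subgroup.mem_top _
  obtain ⟨x, hx⟩ := h10
  obtain ⟨y, hy⟩ := h01
  have hxk : ((x : HeisZ p)).k = 1 := congrArg
    (fun q : Multiplicative (ZMod p) × Multiplicative (ZMod p) => Multiplicative.toAdd q.1) hx
  have hxl : ((x : HeisZ p)).l = 0 := congrArg
    (fun q : Multiplicative (ZMod p) × Multiplicative (ZMod p) => Multiplicative.toAdd q.2) hx
  have hyk : ((y : HeisZ p)).k = 0 := congrArg
    (fun q : Multiplicative (ZMod p) × Multiplicative (ZMod p) => Multiplicative.toAdd q.1) hy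
  have hyl : ((y : HeisZ p)).l = 1 := congrArg
    (fun q : Multiplicative (ZMod p) × Multiplicative (ZMod p) => Multiplicative.toAdd q.2) hy
  have hcomm := hB x x.2 y y.2
  have hac : ((x : HeisZ p) * y).a = ((y : HeisZ p) * x).a := by rw [hcomm]
  rw [HeisZ.mul_def, HeisZ.mul_def] at hac
  simp only [hxk, hxl, hyk, hyl] at hac
  have h1 : (1 : ZMod p) = 0 := by linear_combination hac
  exact one_ne_zero h1

end Aux

/-- Any group containing, for every `N ≥ 1`, a subgroup isomorphic to the Heisenberg
group `H_N` of order `N³` does not have the Jordan property. -/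
theorem statement5 (G : Type*) [Group G]
    (h : ∀ N : ℕ, 1 ≤ N → ∃ H : Subgroup G, Nonempty (H ≃* HeisZ N)) :
    ¬ JordanProperty G := by
  rintro ⟨c, hc⟩
  obtain ⟨p, hpc, hp⟩ := Nat.exists_infinite_primes (c + 1)
  obtain ⟨H, ⟨e⟩⟩ := h p hp.one_lt.le
  haveI : NeZero p := ⟨hp.ne_zero⟩
  haveI : Finite H := Finite.of_equiv _ e.toEquiv.symm
  obtain ⟨A, hA, hAidx⟩ := hc H inferInstance
  set B := A.map e.toMonoidHom with hBdef
  have hBcomm : ∀ x ∈ B, ∀ y ∈ B, x * y = y * x := by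
    rintro _ ⟨x, hx, rfl⟩ _ ⟨y, hy, rfl⟩
    rw [← map_mul, ← map_mul, hA x hx y hy]
  have hBidx : B.index = A.index :=
    A.index_map_eq e.surjective
      (le_of_eq_of_le ((MonoidHom.ker_eq_bot_iff _).mpr e.injective) bot_le)
  have hcard : Nat.card B ≤ p ^ 2 := heis_abelian_card_le p hp B hBcomm
  have hmul : B.index * Nat.card B = p ^ 3 := by
    rw [Subgroup.index_mul_card, heis_card]
  have hpos : 0 < Nat.card B := Nat.card_pos
  have hple : p ≤ B.index := by
    by_contra hlt
    push_neg at hlt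
    have : B.index * Nat.card B < p * p ^ 2 :=
      Nat.mul_lt_mul_of_lt_of_le hlt hcard (pow_pos hp.pos 2)
    rw [hmul] at this
    have : p ^ 3 < p ^ 3 := by calc p ^ 3 < p * p ^ 2 := this
                                   _ = p ^ 3 := by ring
    exact lt_irrefl _ this
  rw [hBidx] at hple
  omega
end

section
/- Let K be a finite abelian group and A an abelian subgroup of the group Γ on ℂ* × (K × K̂) with multiplication (a,k,l)·(a',k',l') = (a·a'·l'(k), k+k', l·l'). If A is finite, then the image of A under the projection to K × K̂ is a subgroup S satisfying: l'(k) = l(k') for all (k,l), (k',l') ∈ S, and |S| ≤ |K|. -/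
@[ext] structure HeisC (K : Type) [AddCommGroup K] where
  a : ℂˣ
  k : K
  l : AddChar K ℂˣ

namespace HeisC
variable {K : Type} [AddCommGroup K]

instance : Group (HeisC K) where
  mul x y := ⟨x.a * y.a * y.l x.k, x.k + y.k, x.l * y.l⟩
  one := ⟨1, 0, 1⟩
  inv x := ⟨x.a⁻¹ * x.l x.k, -x.k, x.l⁻¹⟩
  mul_assoc x y z := by
    refine HeisC.ext ?_ ?_ ?_
    · show (x.a * y.a * y.l x.k) * z.a * z.l (x.k + y.k) =
        x.a * (y.a * z.a * z.l y.k) * (y.l * z.l) x.k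
      apply Units.ext
      simp only [AddChar.map_add_eq_mul, AddChar.mul_apply, Units.val_mul]
      ring
    · show x.k + y.k + z.k = x.k + (y.k + z.k); exact add_assoc _ _ _
    · show x.l * y.l * z.l = x.l * (y.l * z.l); exact mul_assoc _ _ _
  one_mul x := by
    refine HeisC.ext ?_ ?_ ?_
    · show 1 * x.a * x.l 0 = x.a
      rw [AddChar.map_zero_eq_one, one_mul, mul_one]
    · show 0 + x.k = x.k; exact zero_add _
    · show 1 * x.l = x.l; exact one_mul (M := AddChar K ℂˣ) x.l
  mul_one x := by
    refine HeisC.ext ?_ ?_ ?_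
    · show x.a * 1 * (1 : AddChar K ℂˣ) x.k = x.a
      rw [AddChar.one_apply, mul_one, mul_one]
    · show x.k + 0 = x.k; exact add_zero _
    · show x.l * 1 = x.l; exact mul_one (M := AddChar K ℂˣ) x.l
  inv_mul_cancel x := by
    refine HeisC.ext ?_ ?_ ?_
    · show (x.a⁻¹ * x.l x.k) * x.a * x.l (-x.k) = 1
      rw [AddChar.map_neg_eq_inv]
      apply Units.ext
      simp only [Units.val_mul, Units.val_inv_eq_inv_val, Units.val_one]
      field_simp
    · show -x.k + x.k = 0; exact neg_add_cancel _
    · show x.l⁻¹ * x.l = 1; exact inv_mul_cancel _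

theorem mul_def (x y : HeisC K) :
    x * y = ⟨x.a * y.a * y.l x.k, x.k + y.k, x.l * y.l⟩ := rfl
theorem one_def : (1 : HeisC K) = ⟨1, 0, 1⟩ := rfl
theorem inv_def (x : HeisC K) : x⁻¹ = ⟨x.a⁻¹ * x.l x.k, -x.k, x.l⁻¹⟩ := rfl

end HeisC
/-!
Two elements of `Γ` commute exactly when `l'(k) = l(k')`, since their commutator is the scalar
`l'(k) / l(k')`; so the image `S` of a commutative subgroup is isotropic. For the bound, let
`H ≤ K` be the projection of `S`. The characters `l` with `(0, l) ∈ S` are trivial on `H` by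
isotropy, hence are characters of `K ⧸ H`, so `|S| ≤ |H| · |K ⧸ H| = |K|`.
-/

open Multiplicative Function

namespace HeisC
variable {K : Type} [AddCommGroup K]

theorem commute_iff {x y : HeisC K} : Commute x y ↔ y.l x.k = x.l y.k := by
  constructor
  · intro h
    have ha := congrArg HeisC.a h
    simp only [mul_def] at ha
    rw [mul_comm x.a y.a, mul_assoc, mul_assoc] at ha
    exact mul_left_cancel (mul_left_cancel ha)
  · intro h
    refine HeisC.ext ?_ (add_comm x.k y.k) (mul_comm x.l y.l)
    show x.a * y.a * y.l x.k = y.a * x.a * x.l y.k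
    rw [h, mul_comm x.a]

def proj : HeisC K →* Multiplicative K × AddChar K ℂˣ where
  toFun x := (ofAdd x.k, x.l)
  map_one' := rfl
  map_mul' _ _ := rfl

end HeisC

namespace AddChar
variable {K : Type*} [AddCommGroup K]

def annihilator (H : AddSubgroup K) (M : Type*) [CommMonoid M] : Set (AddChar K M) :=
  {ψ | ∀ k ∈ H, ψ k = 1}

variable {M : Type*} [CommMonoid M]

def quotientLift {H : AddSubgroup K} (ψ : AddChar K M) (hψ : ψ ∈ annihilator H M) :
    AddChar (K ⧸ H) M :=
  toAddMonoidHomEquiv.symm <| QuotientAddGroup.lift H (toAddMonoidHomEquiv ψ) fun k hk ↦ by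
    show Additive.ofMul (ψ k) = 0
    rw [hψ k hk]
    rfl

theorem quotientLift_injective (H : AddSubgroup K) :
    Injective fun ψ : annihilator H M ↦ quotientLift ψ.1 ψ.2 :=
  fun _ _ h ↦ Subtype.ext <| DFunLike.ext _ _ fun k : K ↦ DFunLike.congr_fun h (k : K ⧸ H)

variable {𝕜 : Type*} [RCLike 𝕜]

instance [Finite K] : Finite (AddChar K 𝕜ˣ) :=
  .of_injective _ ((Units.coeHom 𝕜).compAddChar_injective_right Units.val_injective)

theorem card_annihilator_le [Finite K] (H : AddSubgroup K) :
    Nat.card (annihilator H 𝕜ˣ) ≤ Nat.card (K ⧸ H) := by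
  have : Fintype (K ⧸ H) := .ofFinite _
  have hinj := ((Units.coeHom 𝕜).compAddChar_injective_right Units.val_injective).comp
    (quotientLift_injective H)
  calc Nat.card (annihilator H 𝕜ˣ) ≤ Nat.card (AddChar (K ⧸ H) 𝕜) :=
        Nat.card_le_card_of_injective _ hinj
    _ ≤ Nat.card (K ⧸ H) := by
        simpa only [Nat.card_eq_fintype_card] using card_addChar_le (K ⧸ H) 𝕜

end AddChar

section Isotropic
variable {K M : Type*} [AddCommGroup K] [CommMonoid M]

def IsIsotropic (S : Set (Multiplicative K × AddChar K M)) : Prop :=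
  ∀ p ∈ S, ∀ q ∈ S, q.2 (toAdd p.1) = p.2 (toAdd q.1)

theorem IsIsotropic.card_le {𝕜 : Type*} [RCLike 𝕜] [Finite K]
    {S : Subgroup (Multiplicative K × AddChar K 𝕜ˣ)}
    (hS : IsIsotropic (S : Set (Multiplicative K × AddChar K 𝕜ˣ))) :
    Nat.card S ≤ Nat.card K := by
  let f : S →* Multiplicative K := (MonoidHom.fst _ _).comp S.subtype
  let H : AddSubgroup K := f.range.toAddSubgroup'
  have hcard : Nat.card S = Nat.card H * Nat.card f.ker := by
    rw [Subgroup.card_eq_card_quotient_mul_card_subgroup f.ker,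
      Nat.card_congr (QuotientGroup.quotientKerEquivRange f).toEquiv]
    rfl
  have hker : Nat.card f.ker ≤ Nat.card (AddChar.annihilator H 𝕜ˣ) := by
    have hfst (p : f.ker) : p.1.1.1 = 1 := p.2
    refine Nat.card_le_card_of_injective (fun p ↦ ⟨p.1.1.2, ?_⟩) fun p p' h ↦ ?_
    · rintro k ⟨q, hq⟩
      calc p.1.1.2 k = p.1.1.2 (toAdd q.1.1) := congrArg p.1.1.2 (congrArg toAdd hq).symm
        _ = q.1.2 (toAdd p.1.1.1) := hS _ q.2 _ p.1.2
        _ = 1 := by rw [hfst, toAdd_one, AddChar.map_zero_eq_one]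
    · exact Subtype.ext <| Subtype.ext <| Prod.ext ((hfst p).trans (hfst p').symm)
        (congrArg Subtype.val h)
  calc Nat.card S = Nat.card H * Nat.card f.ker := hcard
    _ ≤ Nat.card H * Nat.card (K ⧸ H) :=
        Nat.mul_le_mul_left _ (hker.trans (AddChar.card_annihilator_le H))
    _ = Nat.card K := by rw [AddSubgroup.card_eq_card_quotient_mul_card_addSubgroup H, mul_comm]

end Isotropic

theorem statement19_general (K : Type) [AddCommGroup K] [Finite K]
    (A : Subgroup (HeisC K)) (hA : ∀ x ∈ A, ∀ y ∈ A, x * y = y * x) :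
    (∀ x ∈ A, ∀ y ∈ A, y.l x.k = x.l y.k) ∧
    Nat.card ((fun x : HeisC K => (x.k, x.l)) '' (A : Set (HeisC K))) ≤
      Nat.card K := by
  have hiso : ∀ x ∈ A, ∀ y ∈ A, y.l x.k = x.l y.k :=
    fun x hx y hy ↦ HeisC.commute_iff.1 (hA x hx y hy)
  refine ⟨hiso, ?_⟩
  let S : Subgroup (Multiplicative K × AddChar K ℂˣ) := A.map HeisC.proj
  have hS : IsIsotropic (S : Set (Multiplicative K × AddChar K ℂˣ)) := by
    rintro _ ⟨x, hx, rfl⟩ _ ⟨y, hy, rfl⟩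
    exact hiso x hx y hy
  -- the image in the statement is `S` read through the identification `Multiplicative K = K`
  exact hS.card_le

/-- If `A` is a finite abelian subgroup of the group `Γ` on `ℂ* × (K × K̂)`, then the
image of `A` in `K × K̂` is isotropic (`l'(k) = l(k')` on it) and has order at most `|K|`. -/
theorem statement19 (K : Type) [AddCommGroup K] [Finite K]
    (A : Subgroup (HeisC K)) (hA : ∀ x ∈ A, ∀ y ∈ A, x * y = y * x)
    (hfin : Finite A) :
    (∀ x ∈ A, ∀ y ∈ A, y.l x.k = x.l y.k) ∧
    Nat.card ((fun x : HeisC K => (x.k, x.l)) '' (A : Set (HeisC K))) ≤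
      Nat.card K :=
  statement19_general K A hA
end
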